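/- arXiv:1911.11076 — 2 statements merged into one kernel-verified Lean document; each statement's English description precedes it below -/
import Mathlib

section
/- (Bilinear frequency-restricted estimate for KdV, nonresonant case) For s ≥ 0, α ∈ ℝ, M ≥ 1, and f, g, h nonnegative L² functions on ℝ, the integral ∫∫ 1_{|3ξξ₁(ξ-ξ₁)-α|<M} · 1_{|ξ-2ξ₁| ≥ c|ξ|} · |ξ| · ⟨ξ⟩^s ⟨ξ₁⟩^{-s} ⟨ξ-ξ₁⟩^{-s} f(ξ₁) g(ξ-ξ₁) h(ξ) dξ₁ dξ ≲_c M^{1/2} ‖f‖_{L²}‖g‖_{L²}‖h‖_{L²}. -/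
/-!
Cauchy–Schwarz, first in `ξ₁` and then in `ξ`, bounds the form by
`sup_ξ (∫ m(ξ₁, ξ)² dξ₁)^{1/2} ‖f‖ ‖g‖ ‖h‖` for the kernel `m` restricted to the region; the
second step only needs `∫∫ f(ξ₁)² g(ξ - ξ₁)² = ‖f‖² ‖g‖²`. Since `⟨ξ⟩² ≤ 2 ⟨ξ₁⟩² ⟨ξ - ξ₁⟩²`,
`m² ≤ 2^s ξ²`. For fixed `ξ`, the phase `ξ₁ ↦ 3ξξ₁(ξ - ξ₁)` expands distances by at least
`3cξ²` on each of the two halves of `{|ξ - 2ξ₁| ≥ c|ξ|}`, so the fibre `{|Φ - α| < M}` has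
measure at most `4M / (3cξ²)`. The `ξ²` cancels and the supremum is `≲ 2^s M / c`.
-/

open MeasureTheory Set
open scoped ENNReal

theorem ENNReal.lintegral_mul_le_L2_mul_L2 {α : Type*} [MeasurableSpace α] (μ : Measure α)
    {f g : α → ℝ≥0∞} (hf : AEMeasurable f μ) (hg : AEMeasurable g μ) :
    ∫⁻ a, f a * g a ∂μ ≤ (∫⁻ a, f a ^ 2 ∂μ) ^ (1 / 2 : ℝ) * (∫⁻ a, g a ^ 2 ∂μ) ^ (1 / 2 : ℝ) := by
  simpa [ENNReal.rpow_two] using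
    ENNReal.lintegral_mul_le_Lp_mul_Lq μ Real.HolderConjugate.two_two hf hg

section Convolution

variable {G : Type*} [MeasurableSpace G] [AddGroup G] [MeasurableAdd₂ G] [MeasurableNeg G]
  {μ : Measure G} [SFinite μ] [μ.IsAddRightInvariant]

theorem lintegral_lintegral_mul_comp_sub {f g : G → ℝ≥0∞} (hf : Measurable f)
    (hg : Measurable g) :
    ∫⁻ y, ∫⁻ x, f x * g (y - x) ∂μ ∂μ = (∫⁻ x, f x ∂μ) * ∫⁻ x, g x ∂μ := by
  rw [lintegral_lintegral_swap (by fun_prop)]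
  have translate : ∀ x, ∫⁻ y, f x * g (y - x) ∂μ = f x * ∫⁻ y, g y ∂μ := fun x => by
    rw [lintegral_const_mul _ (by fun_prop), lintegral_sub_right_eq_self]
  simp_rw [translate]
  exact lintegral_mul_const _ hf

theorem lintegral_kernel_mul_comp_sub_le {K : G × G → ℝ≥0∞} {f g h : G → ℝ≥0∞} {A : ℝ≥0∞}
    (hK : Measurable K) (hf : Measurable f) (hg : Measurable g) (hh : Measurable h)
    (hA : ∀ y, ∫⁻ x, K (x, y) ^ 2 ∂μ ≤ A) :
    ∫⁻ p, K p * f p.1 * g (p.2 - p.1) * h p.2 ∂μ.prod μ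
      ≤ A ^ (1 / 2 : ℝ) * (∫⁻ x, f x ^ 2 ∂μ) ^ (1 / 2 : ℝ) * (∫⁻ x, g x ^ 2 ∂μ) ^ (1 / 2 : ℝ)
        * (∫⁻ x, h x ^ 2 ∂μ) ^ (1 / 2 : ℝ) := by
  set J : G → ℝ≥0∞ := fun y => ∫⁻ x, f x ^ 2 * g (y - x) ^ 2 ∂μ
  have hJ : Measurable J :=
    (by fun_prop : Measurable fun q : G × G => f q.2 ^ 2 * g (q.1 - q.2) ^ 2).lintegral_prod_right'
  have fibre : ∀ y, ∫⁻ x, K (x, y) * (f x * g (y - x)) ∂μ ≤ A ^ (1 / 2 : ℝ) * J y ^ (1 / 2 : ℝ) :=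
    fun y => (ENNReal.lintegral_mul_le_L2_mul_L2 μ (f := fun x => K (x, y))
      (g := fun x => f x * g (y - x)) (by fun_prop) (by fun_prop)).trans <| by
      simp_rw [mul_pow]
      gcongr
      exact hA y
  calc ∫⁻ p, K p * f p.1 * g (p.2 - p.1) * h p.2 ∂μ.prod μ
      = ∫⁻ y, (∫⁻ x, K (x, y) * (f x * g (y - x)) ∂μ) * h y ∂μ := by
        rw [lintegral_prod_symm _ (by fun_prop)]
        refine lintegral_congr fun y => ?_
        rw [← lintegral_mul_const _ (by fun_prop)]
        simp only [mul_assoc]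
    _ ≤ ∫⁻ y, A ^ (1 / 2 : ℝ) * (J y ^ (1 / 2 : ℝ) * h y) ∂μ := by
        refine lintegral_mono fun y => ?_
        calc (∫⁻ x, K (x, y) * (f x * g (y - x)) ∂μ) * h y
            ≤ (A ^ (1 / 2 : ℝ) * J y ^ (1 / 2 : ℝ)) * h y := by gcongr; exact fibre y
          _ = A ^ (1 / 2 : ℝ) * (J y ^ (1 / 2 : ℝ) * h y) := mul_assoc _ _ _
    _ = A ^ (1 / 2 : ℝ) * ∫⁻ y, J y ^ (1 / 2 : ℝ) * h y ∂μ :=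
        lintegral_const_mul _ (by fun_prop)
    _ ≤ A ^ (1 / 2 : ℝ) * ((∫⁻ y, J y ∂μ) ^ (1 / 2 : ℝ) * (∫⁻ x, h x ^ 2 ∂μ) ^ (1 / 2 : ℝ)) := by
        gcongr
        refine (ENNReal.lintegral_mul_le_L2_mul_L2 μ (by fun_prop) (by fun_prop)).trans_eq ?_
        simp_rw [← ENNReal.rpow_natCast, ← ENNReal.rpow_mul]
        norm_num
    _ = _ := by
        have hJ_int : ∫⁻ y, J y ∂μ = (∫⁻ x, f x ^ 2 ∂μ) * ∫⁻ x, g x ^ 2 ∂μ :=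
          lintegral_lintegral_mul_comp_sub (f := fun x => f x ^ 2) (g := fun x => g x ^ 2)
            (by fun_prop) (by fun_prop)
        rw [hJ_int, ENNReal.mul_rpow_of_nonneg _ _ (by norm_num)]
        ring

end Convolution

theorem Real.volume_le_of_mul_abs_sub_le {S : Set ℝ} {φ : ℝ → ℝ} {κ a L : ℝ} (hκ : 0 < κ)
    (hφ : ∀ x ∈ S, ∀ y ∈ S, κ * |x - y| ≤ |φ x - φ y|) (hL : ∀ x ∈ S, |φ x - a| < L) :
    volume S ≤ ENNReal.ofReal (2 * L / κ) := by
  refine (Real.volume_le_diam S).trans (Metric.ediam_le_of_forall_dist_le fun x hx y hy => ?_)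
  rw [Real.dist_eq, le_div_iff₀ hκ]
  linarith [hφ x hx y hy, hL x hx, hL y hy, abs_sub_le (φ x) a (φ y), abs_sub_comm a (φ y)]

def kdvPhase (ξ ξ₁ : ℝ) : ℝ := 3 * ξ * ξ₁ * (ξ - ξ₁)

theorem mul_sq_mul_abs_sub_le_abs_kdvPhase_sub {c ξ x y : ℝ} (hx : c * |ξ| ≤ |ξ - 2 * x|)
    (hy : c * |ξ| ≤ |ξ - 2 * y|)
    (hsign : 0 ≤ ξ - 2 * x ∧ 0 ≤ ξ - 2 * y ∨ ξ - 2 * x ≤ 0 ∧ ξ - 2 * y ≤ 0) :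
    3 * c * ξ ^ 2 * |x - y| ≤ |kdvPhase ξ x - kdvPhase ξ y| := by
  -- `2 (ξ - x - y) = (ξ - 2x) + (ξ - 2y)` is a sum of two terms of the same sign
  have hsum : 2 * |ξ - x - y| = |ξ - 2 * x| + |ξ - 2 * y| := by
    rw [← abs_add_eq_add_abs_iff _ _ |>.mpr hsign, ← abs_two, ← abs_mul]
    ring_nf
  calc 3 * c * ξ ^ 2 * |x - y| = 3 * |ξ| * (c * |ξ|) * |x - y| := by rw [← sq_abs]; ring
    _ ≤ 3 * |ξ| * |ξ - x - y| * |x - y| := by gcongr; linarith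
    _ = |kdvPhase ξ x - kdvPhase ξ y| := by
        rw [show kdvPhase ξ x - kdvPhase ξ y = 3 * ξ * (ξ - x - y) * (x - y) by
            unfold kdvPhase; ring,
          abs_mul, abs_mul, abs_mul, abs_of_pos (by norm_num : (0 : ℝ) < 3)]

theorem volume_kdvFibre_le {c M : ℝ} (hc : 0 < c) (hM : 0 ≤ M) (α : ℝ) {ξ : ℝ} (hξ : ξ ≠ 0) :
    volume {x : ℝ | |kdvPhase ξ x - α| < M ∧ c * |ξ| ≤ |ξ - 2 * x|}
      ≤ ENNReal.ofReal (4 * M / (3 * c * ξ ^ 2)) := by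
  set T := {x : ℝ | |kdvPhase ξ x - α| < M ∧ c * |ξ| ≤ |ξ - 2 * x|}
  have hκ : 0 < 3 * c * ξ ^ 2 := by positivity
  have half : ∀ side : Set ℝ, (∀ x ∈ side, ∀ y ∈ side,
        0 ≤ ξ - 2 * x ∧ 0 ≤ ξ - 2 * y ∨ ξ - 2 * x ≤ 0 ∧ ξ - 2 * y ≤ 0) →
      volume (T ∩ side) ≤ ENNReal.ofReal (2 * M / (3 * c * ξ ^ 2)) := fun side hside =>
    Real.volume_le_of_mul_abs_sub_le hκ
      (fun x hx y hy => mul_sq_mul_abs_sub_le_abs_kdvPhase_sub hx.1.2 hy.1.2 (hside x hx.2 y hy.2))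
      (fun x hx => hx.1.1)
  calc volume T
      ≤ volume (T ∩ {x | 0 ≤ ξ - 2 * x} ∪ T ∩ {x | ξ - 2 * x ≤ 0}) :=
        measure_mono fun x hx => (le_total 0 (ξ - 2 * x)).imp (⟨hx, ·⟩) (⟨hx, ·⟩)
    _ ≤ ENNReal.ofReal (2 * M / (3 * c * ξ ^ 2)) + ENNReal.ofReal (2 * M / (3 * c * ξ ^ 2)) :=
        (measure_union_le _ _).trans <| add_le_add
          (half _ fun x hx y hy => .inl ⟨hx, hy⟩) (half _ fun x hx y hy => .inr ⟨hx, hy⟩)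
    _ = ENNReal.ofReal (4 * M / (3 * c * ξ ^ 2)) := by
        rw [← ENNReal.ofReal_add (by positivity) (by positivity)]
        ring_nf

-- `p = (ξ₁, ξ)`; this is `|ξ| ⟨ξ⟩^s ⟨ξ₁⟩^{-s} ⟨ξ - ξ₁⟩^{-s}` with `⟨x⟩ = (1 + x²)^{1/2}`.
noncomputable def kdvMultiplier (s : ℝ) (p : ℝ × ℝ) : ℝ :=
  |p.2| * (1 + p.2 ^ 2) ^ (s / 2) * (1 + p.1 ^ 2) ^ (-s / 2) * (1 + (p.2 - p.1) ^ 2) ^ (-s / 2)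

theorem kdvMultiplier_nonneg (s : ℝ) (p : ℝ × ℝ) : 0 ≤ kdvMultiplier s p := by
  unfold kdvMultiplier; positivity

@[fun_prop]
theorem measurable_kdvMultiplier (s : ℝ) : Measurable (kdvMultiplier s) := by
  unfold kdvMultiplier; fun_prop

theorem kdvMultiplier_sq_le {s : ℝ} (hs : 0 ≤ s) (p : ℝ × ℝ) :
    kdvMultiplier s p ^ 2 ≤ 2 ^ s * p.2 ^ 2 := by
  obtain ⟨x, y⟩ := p
  have hx : 0 < 1 + x ^ 2 := by positivity
  have hyx : 0 < 1 + (y - x) ^ 2 := by positivity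
  have bracket : (1 + y ^ 2) ^ (s / 2)
      ≤ 2 ^ (s / 2) * ((1 + x ^ 2) ^ (s / 2) * (1 + (y - x) ^ 2) ^ (s / 2)) := by
    rw [← Real.mul_rpow hx.le hyx.le, ← Real.mul_rpow zero_le_two (by positivity)]
    gcongr
    nlinarith [sq_nonneg (2 * x - y), sq_nonneg (x * (y - x))]
  have bound : kdvMultiplier s (x, y) ≤ 2 ^ (s / 2) * |y| := by
    simp only [kdvMultiplier, neg_div, Real.rpow_neg hx.le, Real.rpow_neg hyx.le]
    rw [← div_eq_mul_inv, ← div_eq_mul_inv, div_div, mul_div_assoc, mul_comm _ |y|]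
    gcongr
    rwa [div_le_iff₀ (by positivity)]
  calc kdvMultiplier s (x, y) ^ 2 ≤ (2 ^ (s / 2) * |y|) ^ 2 :=
        pow_le_pow_left₀ (kdvMultiplier_nonneg s _) bound 2
    _ = 2 ^ s * y ^ 2 := by
        rw [mul_pow, sq_abs, ← Real.rpow_natCast, ← Real.rpow_mul zero_le_two]
        norm_num

def kdvRegion (c α M : ℝ) : Set (ℝ × ℝ) :=
  {p | |kdvPhase p.2 p.1 - α| < M ∧ c * |p.2| ≤ |p.2 - 2 * p.1|}

theorem measurableSet_kdvRegion (c α M : ℝ) : MeasurableSet (kdvRegion c α M) := by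
  simp_rw [kdvRegion, kdvPhase, ofPred_and]
  exact (measurableSet_lt (by fun_prop) (by fun_prop)).inter
    (measurableSet_le (by fun_prop) (by fun_prop))

theorem lintegral_indicator_kdvMultiplier_sq_le {s c M : ℝ} (hs : 0 ≤ s) (hc : 0 < c)
    (hM : 0 ≤ M) (α ξ : ℝ) :
    ∫⁻ ξ₁, (kdvRegion c α M).indicator (fun p => ENNReal.ofReal (kdvMultiplier s p)) (ξ₁, ξ) ^ 2
      ≤ ENNReal.ofReal (2 ^ s * (4 * M / (3 * c))) := by
  set T := {ξ₁ | (ξ₁, ξ) ∈ kdvRegion c α M}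
  have hT : MeasurableSet T := measurable_prodMk_right (measurableSet_kdvRegion c α M)
  calc ∫⁻ ξ₁, (kdvRegion c α M).indicator (fun p => ENNReal.ofReal (kdvMultiplier s p)) (ξ₁, ξ) ^ 2
      ≤ ∫⁻ ξ₁, T.indicator (fun _ => ENNReal.ofReal (2 ^ s * ξ ^ 2)) ξ₁ := by
        refine lintegral_mono fun ξ₁ => ?_
        by_cases hξ₁ : ξ₁ ∈ T
        · have hmem : (ξ₁, ξ) ∈ kdvRegion c α M := hξ₁
          rw [indicator_of_mem hmem, indicator_of_mem hξ₁,
            ← ENNReal.ofReal_pow (kdvMultiplier_nonneg s _)]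
          exact ENNReal.ofReal_le_ofReal (kdvMultiplier_sq_le hs _)
        · have hξ₁' : (ξ₁, ξ) ∉ kdvRegion c α M := hξ₁
          simp [indicator_of_notMem, hξ₁, hξ₁']
    _ = ENNReal.ofReal (2 ^ s * ξ ^ 2) * volume T := lintegral_indicator_const hT _
    _ ≤ ENNReal.ofReal (2 ^ s * (4 * M / (3 * c))) := by
        rcases eq_or_ne ξ 0 with rfl | hξ
        · simp
        calc ENNReal.ofReal (2 ^ s * ξ ^ 2) * volume T
            ≤ ENNReal.ofReal (2 ^ s * ξ ^ 2) * ENNReal.ofReal (4 * M / (3 * c * ξ ^ 2)) := by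
              gcongr
              exact volume_kdvFibre_le hc hM α hξ
          _ = ENNReal.ofReal (2 ^ s * (4 * M / (3 * c))) := by
              rw [← ENNReal.ofReal_mul (by positivity)]
              congr 1
              field_simp

/-- Bilinear frequency-restricted estimate for KdV, nonresonant case: with
`Φ(ξ,ξ₁) = 3ξξ₁(ξ-ξ₁)`, on the region `|ξ-2ξ₁| ≥ c|ξ|` and `|Φ-α| < M` one has
`∫∫ |ξ| ⟨ξ⟩^s ⟨ξ₁⟩^{-s} ⟨ξ-ξ₁⟩^{-s} f(ξ₁) g(ξ-ξ₁) h(ξ) ≲_c M^{1/2} ‖f‖‖g‖‖h‖`.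
Here `p.1 = ξ₁`, `p.2 = ξ` and `⟨x⟩ = (1+x²)^{1/2}`. -/
theorem kdv_bilinear_frequency_restricted (s : ℝ) (hs : 0 ≤ s) (c : ℝ) (hc : 0 < c) :
    ∃ C > 0, ∀ (α M : ℝ), 1 ≤ M → ∀ f g h : ℝ → ℝ,
      Measurable f → Measurable g → Measurable h →
      (∀ x, 0 ≤ f x) → (∀ x, 0 ≤ g x) → (∀ x, 0 ≤ h x) →
      (∫⁻ p in {p : ℝ × ℝ |
            |3 * p.2 * p.1 * (p.2 - p.1) - α| < M ∧ c * |p.2| ≤ |p.2 - 2 * p.1|},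
          ENNReal.ofReal (|p.2| * (1 + p.2^2) ^ (s/2) * (1 + p.1^2) ^ (-s/2)
            * (1 + (p.2 - p.1)^2) ^ (-s/2) * f p.1 * g (p.2 - p.1) * h p.2))
        ≤ ENNReal.ofReal (C * M ^ ((1:ℝ)/2))
          * (∫⁻ x : ℝ, ENNReal.ofReal ((f x)^2)) ^ ((1:ℝ)/2)
          * (∫⁻ x : ℝ, ENNReal.ofReal ((g x)^2)) ^ ((1:ℝ)/2)
          * (∫⁻ x : ℝ, ENNReal.ofReal ((h x)^2)) ^ ((1:ℝ)/2) := by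
  refine ⟨√(2 ^ s * (4 / (3 * c))), by positivity, fun α M hM f g h hf hg hh hf0 hg0 hh0 => ?_⟩
  set K := (kdvRegion c α M).indicator (fun p => ENNReal.ofReal (kdvMultiplier s p))
  have L2_norm : ∀ u : ℝ → ℝ, (∀ x, 0 ≤ u x) →
      ∫⁻ x, ENNReal.ofReal (u x ^ 2) = ∫⁻ x, ENNReal.ofReal (u x) ^ 2 :=
    fun u hu => lintegral_congr fun x => ENNReal.ofReal_pow (hu x) 2
  have constant : ENNReal.ofReal (2 ^ s * (4 * M / (3 * c))) ^ (1 / 2 : ℝ)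
      = ENNReal.ofReal (√(2 ^ s * (4 / (3 * c))) * M ^ (1 / 2 : ℝ)) := by
    rw [ENNReal.ofReal_rpow_of_nonneg (by positivity) (by norm_num), ← Real.sqrt_eq_rpow,
      ← Real.sqrt_eq_rpow, ← Real.sqrt_mul (by positivity)]
    ring_nf
  change ∫⁻ p in kdvRegion c α M,
      ENNReal.ofReal (kdvMultiplier s p * f p.1 * g (p.2 - p.1) * h p.2) ≤ _
  calc ∫⁻ p in kdvRegion c α M,
        ENNReal.ofReal (kdvMultiplier s p * f p.1 * g (p.2 - p.1) * h p.2)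
      = ∫⁻ p, K p * ENNReal.ofReal (f p.1) * ENNReal.ofReal (g (p.2 - p.1))
          * ENNReal.ofReal (h p.2) ∂volume.prod volume := by
        rw [← lintegral_indicator (measurableSet_kdvRegion c α M), Measure.volume_eq_prod]
        refine lintegral_congr fun p => ?_
        by_cases hp : p ∈ kdvRegion c α M
        · have hK := kdvMultiplier_nonneg s p
          rw [indicator_of_mem hp, show K p = ENNReal.ofReal (kdvMultiplier s p) from
            indicator_of_mem hp _, ENNReal.ofReal_mul (mul_nonneg (mul_nonneg hK (hf0 _)) (hg0 _)),
            ENNReal.ofReal_mul (mul_nonneg hK (hf0 _)), ENNReal.ofReal_mul hK]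
        · simp [K, hp]
    _ ≤ _ := lintegral_kernel_mul_comp_sub_le
        ((measurable_kdvMultiplier s).ennreal_ofReal.indicator (measurableSet_kdvRegion c α M))
        hf.ennreal_ofReal hg.ennreal_ofReal hh.ennreal_ofReal
        (lintegral_indicator_kdvMultiplier_sq_le hs hc (by linarith) α)
    _ = _ := by rw [L2_norm f hf0, L2_norm g hg0, L2_norm h hh0, constant]
end

section
/- For s ∈ (0,1) and the cubic NLS phase Φ = 2(ξ-ξ₁)(ξ-ξ₃) on the hyperplane ξ = ξ₁ - ξ₂ + ξ₃: if |ξ-ξ₁| ≥ 1 and |ξ-ξ₃| ≥ 1 and |Φ - α| < M, then 1 ≤ |ξ-ξ₃| < (|α|+M)/|ξ-ξ₁| ≤ |α| + M; consequently for fixed ξ, ∫∫ 1_{|Φ-α|<M, |ξ-ξ₁|,|ξ-ξ₃|≥1} dξ₁ dξ₃ ≤ C M (1 + log(|α| + M)). -/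
/-!
In the variables `u = ξ - ξ₁`, `v = ξ - ξ₃` (a measure-preserving change of variables)
the phase is `2uv`. On the region one has `|2uv| < |α| + M`, hence `|v| < (|α| + M) / |u|`
and, symmetrically, `1 ≤ |u| ≤ |α| + M`. For such a fixed `u` the condition `|2uv - α| < M`
confines `v` to an interval of length `M / |u|`, so by Fubini the region has measure at most
`∫_{1 ≤ |u| ≤ |α| + M} M / |u| du = 2 M log (|α| + M)`.
-/

open MeasureTheory Set
open scoped ENNReal

theorem lintegral_comp_abs (f : ℝ → ℝ≥0∞) :
    ∫⁻ x, f |x| = 2 * ∫⁻ x in Ioi 0, f x := by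
  have h_pos : ∫⁻ x in Ioi 0, f |x| = ∫⁻ x in Ioi 0, f x :=
    setLIntegral_congr_fun measurableSet_Ioi fun x hx => by rw [abs_of_pos hx]
  have h_neg : ∫⁻ x in (Ioi 0)ᶜ, f |x| = ∫⁻ x in Ioi 0, f |x| := by
    have h_Iio : Iio (0 : ℝ) = Neg.neg ⁻¹' Ioi 0 := by ext; simp
    rw [compl_Ioi, ← setLIntegral_congr Iio_ae_eq_Iic, h_Iio]
    simpa only [abs_neg] using
      (Measure.measurePreserving_neg volume).setLIntegral_comp_preimage_emb
        (MeasurableEquiv.neg ℝ).measurableEmbedding (fun x => f |x|) (Ioi 0)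
  rw [← lintegral_add_compl _ measurableSet_Ioi, h_neg, h_pos, two_mul]

theorem lintegral_Icc_ofReal_div {a b c : ℝ} (ha : 0 < a) (hab : a ≤ b) (hc : 0 ≤ c) :
    ∫⁻ x in Icc a b, ENNReal.ofReal (c / x) = ENNReal.ofReal (c * Real.log (b / a)) := by
  have h_cont : ContinuousOn (fun x => c / x) (Icc a b) :=
    continuousOn_const.div continuousOn_id fun x hx => (ha.trans_le hx.1).ne'
  have h_nonneg : 0 ≤ᵐ[volume.restrict (Icc a b)] fun x => c / x :=
    (ae_restrict_iff' measurableSet_Icc).mpr <| .of_forall fun x hx =>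
      div_nonneg hc (ha.le.trans hx.1)
  rw [← ofReal_integral_eq_lintegral_ofReal h_cont.integrableOn_Icc h_nonneg,
    integral_Icc_eq_integral_Ioc, ← intervalIntegral.integral_of_le hab]
  simp only [div_eq_mul_inv, intervalIntegral.integral_const_mul,
    integral_inv_of_pos ha (ha.trans_le hab)]

theorem volume_setOf_abs_mul_sub_lt {a : ℝ} (ha : a ≠ 0) (b M : ℝ) :
    volume {y : ℝ | |a * y - b| < M} = ENNReal.ofReal (2 * M / |a|) := by
  have h_ball : {y : ℝ | |a * y - b| < M} = Metric.ball (b / a) (M / |a|) := by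
    ext y
    have h_factor : a * y - b = a * (y - b / a) := by field_simp
    rw [mem_ofPred_eq, Metric.mem_ball, Real.dist_eq, h_factor, abs_mul, mul_comm,
      ← lt_div_iff₀ (abs_pos.mpr ha)]
  rw [h_ball, Real.volume_ball, mul_div_assoc]

def phaseRegion (α M : ℝ) : Set (ℝ × ℝ) :=
  {p | |2 * p.1 * p.2 - α| < M ∧ 1 ≤ |p.1| ∧ 1 ≤ |p.2|}

theorem measurableSet_phaseRegion (α M : ℝ) : MeasurableSet (phaseRegion α M) := by
  unfold phaseRegion
  measurability

theorem abs_mul_abs_lt_of_abs_two_mul_sub_lt {u v α M : ℝ} (h : |2 * u * v - α| < M) :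
    |u| * |v| < |α| + M := by
  have h_tri := abs_sub_abs_le_abs_sub (2 * u * v) α
  rw [abs_mul, abs_mul, abs_two] at h_tri
  nlinarith [abs_nonneg u, abs_nonneg v]

theorem abs_lt_div_le_of_abs_two_mul_sub_lt {u v α M : ℝ} (hu : 1 ≤ |u|)
    (h : |2 * u * v - α| < M) : |v| < (|α| + M) / |u| ∧ (|α| + M) / |u| ≤ |α| + M := by
  have h_prod := abs_mul_abs_lt_of_abs_two_mul_sub_lt h
  refine ⟨(lt_div_iff₀ (by linarith)).mpr (by linarith), div_le_self ?_ hu⟩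
  exact (mul_nonneg (abs_nonneg u) (abs_nonneg v)).trans h_prod.le

theorem volume_phaseRegion_slice_le (α M u : ℝ) :
    volume (Prod.mk u ⁻¹' phaseRegion α M) ≤
      (Icc 1 (|α| + M)).indicator (fun r => ENNReal.ofReal (M / r)) |u| := by
  by_cases hu : |u| ∈ Icc 1 (|α| + M)
  · have hu₀ : u ≠ 0 := abs_pos.mp (by linarith [hu.1])
    rw [indicator_of_mem hu]
    calc volume (Prod.mk u ⁻¹' phaseRegion α M)
        ≤ volume {v : ℝ | |2 * u * v - α| < M} := measure_mono fun v hv => hv.1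
      _ = ENNReal.ofReal (M / |u|) := by
        rw [volume_setOf_abs_mul_sub_lt (by positivity), abs_mul, abs_two,
          mul_div_mul_left _ _ two_ne_zero]
  · rw [indicator_of_notMem hu, nonpos_iff_eq_zero, measure_eq_zero_iff_ae_notMem]
    refine .of_forall fun v ⟨_, hu₁, hv₁⟩ => hu ⟨hu₁, ?_⟩
    have h_bound := abs_lt_div_le_of_abs_two_mul_sub_lt (v := u) hv₁ (by rwa [mul_right_comm])
    exact (h_bound.1.trans_le h_bound.2).le

theorem volume_phaseRegion_le {α M : ℝ} (hM : 0 ≤ M) (hA : 1 ≤ |α| + M) :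
    volume (phaseRegion α M) ≤ ENNReal.ofReal (2 * M * Real.log (|α| + M)) := by
  have h_pos : Icc 1 (|α| + M) ⊆ Ioi 0 := fun r hr => zero_lt_one.trans_le hr.1
  rw [Measure.volume_eq_prod, Measure.prod_apply (measurableSet_phaseRegion α M)]
  calc ∫⁻ u, volume (Prod.mk u ⁻¹' phaseRegion α M)
      ≤ ∫⁻ u, (Icc 1 (|α| + M)).indicator (fun r => ENNReal.ofReal (M / r)) |u| :=
        lintegral_mono fun u => volume_phaseRegion_slice_le α M u
    _ = 2 * ∫⁻ r in Icc 1 (|α| + M), ENNReal.ofReal (M / r) := by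
        rw [lintegral_comp_abs, lintegral_indicator measurableSet_Icc,
          Measure.restrict_restrict measurableSet_Icc, inter_eq_left.mpr h_pos]
    _ = ENNReal.ofReal (2 * M * Real.log (|α| + M)) := by
        rw [lintegral_Icc_ofReal_div one_pos hA hM, div_one, mul_assoc,
          ENNReal.ofReal_mul zero_le_two, ENNReal.ofReal_ofNat]

/-- NLS phase bounds: on the region `|ξ-ξ₁|, |ξ-ξ₃| ≥ 1` with `|Φ-α| < M`,
`Φ = 2(ξ-ξ₁)(ξ-ξ₃)`, one has `1 ≤ |ξ-ξ₃| < (|α|+M)/|ξ-ξ₁| ≤ |α|+M`; consequently the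
measure in `(ξ₁,ξ₃)` of this region is at most `C M (1 + log(|α|+M))`, uniformly in ξ. -/
theorem nls_phase_region_bound :
    (∀ ξ ξ₁ ξ₃ α M : ℝ, 1 ≤ M → 1 ≤ |ξ - ξ₁| → 1 ≤ |ξ - ξ₃| →
      |2 * (ξ - ξ₁) * (ξ - ξ₃) - α| < M →
      1 ≤ |ξ - ξ₃| ∧ |ξ - ξ₃| < (|α| + M) / |ξ - ξ₁| ∧ (|α| + M) / |ξ - ξ₁| ≤ |α| + M) ∧
    (∃ C > 0, ∀ ξ α M : ℝ, 1 ≤ M →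
      volume {p : ℝ × ℝ | |2 * (ξ - p.1) * (ξ - p.2) - α| < M ∧
          1 ≤ |ξ - p.1| ∧ 1 ≤ |ξ - p.2|}
        ≤ ENNReal.ofReal (C * M * (1 + Real.log (|α| + M)))) := by
  refine ⟨fun ξ ξ₁ ξ₃ α M _ h₁ h₃ hΦ => ⟨h₃, abs_lt_div_le_of_abs_two_mul_sub_lt h₁ hΦ⟩,
    2, two_pos, fun ξ α M hM => ?_⟩
  have hA : 1 ≤ |α| + M := by linarith [abs_nonneg α]
  have h_sub := Measure.measurePreserving_sub_left (volume : Measure ℝ) ξ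
  have h_translate : MeasurePreserving (Prod.map (ξ - ·) (ξ - ·)) (volume : Measure (ℝ × ℝ)) volume :=
    h_sub.prod h_sub
  calc volume (Prod.map (ξ - ·) (ξ - ·) ⁻¹' phaseRegion α M)
      = volume (phaseRegion α M) :=
        h_translate.measure_preimage (measurableSet_phaseRegion α M).nullMeasurableSet
    _ ≤ ENNReal.ofReal (2 * M * Real.log (|α| + M)) := volume_phaseRegion_le (by linarith) hA
    _ ≤ ENNReal.ofReal (2 * M * (1 + Real.log (|α| + M))) := by
        gcongr
        linarith
end
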